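/- Let h be a hyperexponential term given in standard form h = c0·exp(a/b)·∏_{ℓ=1}^L c_ℓ^{e_ℓ}, and let r ≥ 1 be an integer. Suppose deg_y a = deg_y b = 0 and deg_y c_ℓ = 0 for every ℓ with e_ℓ not the image in K of an integer, and set η = Σ_{ℓ=1}^L e_ℓ·deg_y c_ℓ (an integer in this situation, since e_ℓ ∈ ℤ whenever deg_y c_ℓ > 0). Then for every nonzero polynomial q ∈ K[x,y] whose coefficient of y^{γ(r−1)−η} (as a polynomial in y with coefficients in K[x]) is zero, the element Q = q·h/(c0·(b·b*·∏_{ℓ=1}^L c_ℓ)^{r−1}) of E satisfies D_y Q ≠ 0. -/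

import Mathlib

/-!
Because `a` and `b` are free of `y`, so is `b*` (it divides `b`), and the `y`-logarithmic
derivative of `Q` is `q_y / q + ∑ ℓ, (e ℓ - (r - 1)) (c ℓ)_y / c ℓ`. If it vanishes, clearing
denominators and comparing leading coefficients in `y` (the Euler operator `y ∂_y` multiplies the
coefficient of `y ^ n` by `n`) gives `deg_y q = (r - 1) ∑ ℓ, deg_y (c ℓ) - η = γ (r - 1) - η`, so
the coefficient of `q` at `y ^ (γ (r - 1) - η)` is its nonzero leading coefficient.

The comparison of coefficients in `y` is done after `Polynomial.Bivariate.swap`, which makes `y`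
the outer variable and turns `DY` into `Polynomial.derivative`.
-/

open Polynomial Finset

/-- The derivative with respect to `y` on `K[y][x]`
(we represent bivariate polynomials as `Polynomial (Polynomial K)`,
the *outer* variable being `x`, the *inner* variable being `y`). -/
noncomputable def DY {K : Type*} [CommRing K] (p : Polynomial (Polynomial K)) :
    Polynomial (Polynomial K) :=
  p.sum fun n a => Polynomial.C (Polynomial.derivative a) * Polynomial.X ^ n

/-- The degree with respect to `y` of an element of `K[y][x]`. -/
noncomputable def degY {K : Type*} [CommRing K] (p : Polynomial (Polynomial K)) : ℕ :=
  p.support.sup fun n => (p.coeff n).natDegree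

/-- The embedding of `K[x]` into `K[y][x]` (polynomials free of `y`). -/
noncomputable def liftX {K : Type*} [CommRing K] (p : Polynomial K) :
    Polynomial (Polynomial K) :=
  p.map (Polynomial.C : K →+* Polynomial K)

/-- The falling factorial `z(z-1)⋯(z-n+1)` of an element of `K`. -/
noncomputable def ffall {K : Type*} [Field K] (z : K) (n : ℕ) : K :=
  ∏ j ∈ Finset.range n, (z - (j : K))

namespace Polynomial.Bivariate

variable {K : Type*} [CommRing K]

theorem coeff_coeff_swap (p : K[X][X]) (n m : ℕ) :
    ((swap p).coeff n).coeff m = (p.coeff m).coeff n := by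
  induction p using Polynomial.induction_on' with
  | add p q hp hq => simp only [map_add, coeff_add, hp, hq]
  | monomial k f =>
    induction f using Polynomial.induction_on' with
    | add f g hf hg => simp only [(monomial k).map_add, map_add, coeff_add, hf, hg]
    | monomial j r =>
      rw [swap_monomial_monomial]
      by_cases hj : j = n <;> by_cases hk : k = m <;> simp [coeff_monomial, hj, hk]

theorem coeff_DY (p : K[X][X]) (k : ℕ) : (DY p).coeff k = derivative (p.coeff k) := by
  rw [DY, Polynomial.sum_def, finsetSum_coeff]
  simp only [coeff_C_mul_X_pow]
  rw [Finset.sum_ite_eq]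
  split_ifs with hk
  · rfl
  · rw [notMem_support_iff.mp hk, derivative_zero]

theorem swap_DY (p : K[X][X]) : swap (DY p) = derivative (swap p) := by
  ext n m
  simp only [coeff_coeff_swap, coeff_DY, coeff_derivative]
  rw [show ((n : K[X]) + 1) = C ((n : K) + 1) by simp, coeff_mul_C, coeff_coeff_swap]

theorem natDegree_coeff_le_degY (p : K[X][X]) (n : ℕ) : (p.coeff n).natDegree ≤ degY p := by
  by_cases hn : n ∈ p.support
  · exact Finset.le_sup (f := fun n => (p.coeff n).natDegree) hn
  · simp [notMem_support_iff.mp hn]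

theorem degY_eq_natDegree_swap (p : K[X][X]) : degY p = (swap p).natDegree := by
  apply le_antisymm
  · refine Finset.sup_le fun n hn => le_natDegree_of_ne_zero fun h0 => ?_
    have := coeff_coeff_swap p (p.coeff n).natDegree n
    rw [h0, coeff_zero, coeff_natDegree, eq_comm, leadingCoeff_eq_zero] at this
    exact mem_support_iff.mp hn this
  · refine natDegree_le_iff_coeff_eq_zero.mpr fun m hm => Polynomial.ext fun n => ?_
    rw [coeff_coeff_swap, coeff_zero]
    exact coeff_eq_zero_of_natDegree_lt
      ((natDegree_coeff_le_degY p n).trans_lt (by exact_mod_cast hm))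

theorem derivative_swap_eq_zero_of_degY_eq_zero {p : K[X][X]} (hp : degY p = 0) :
    derivative (swap p) = 0 :=
  derivative_of_natDegree_zero (degY_eq_natDegree_swap p ▸ hp)

theorem exists_coeff_coeff_natDegree_swap_ne_zero {p : K[X][X]} (hp : p ≠ 0) :
    ∃ n, (p.coeff n).coeff (swap p).natDegree ≠ 0 := by
  have hlc : (swap p).leadingCoeff ≠ 0 := by simpa using hp
  by_contra! h0
  exact hlc (Polynomial.ext fun n => by rw [leadingCoeff, coeff_coeff_swap, h0, coeff_zero])

theorem degY_le_of_dvd [IsDomain K] {p q : K[X][X]} (hpq : p ∣ q) (hq : q ≠ 0) :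
    degY p ≤ degY q := by
  replace hq : swap q ≠ 0 := by simpa using hq
  rw [degY_eq_natDegree_swap, degY_eq_natDegree_swap]
  obtain ⟨r, rfl⟩ := hpq
  rw [map_mul] at hq ⊢
  exact natDegree_le_of_dvd (dvd_mul_right _ _) hq

end Polynomial.Bivariate

theorem Squarefree.dvd_of_forall_prime_dvd {α : Type*} [CommMonoidWithZero α]
    [UniqueFactorizationMonoid α] {x y : α} (hx : Squarefree x)
    (hxy : ∀ p, Prime p → p ∣ x → p ∣ y) : x ∣ y := by
  induction x using UniqueFactorizationMonoid.induction_on_prime with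
  | h₁ =>
    have h01 : (0 : α) = 1 := isUnit_zero_iff.mp (hx 0 (by simp))
    rw [zero_dvd_iff, ← mul_one y, ← h01, mul_zero]
  | h₂ u hu => exact hu.dvd
  | h₃ a p _ hp ih =>
    exact (IsRelPrime.of_squarefree_mul hx).mul_dvd (hxy p hp (dvd_mul_right p a))
      (ih (hx.of_mul_right) fun r hr hra => hxy r hr (hra.mul_left p))

theorem numerator_eq_zero_of_apply_mul_div_eq_zero {A E : Type*} [CommRing A] [Field E]
    {D : E → E} (hD : ∀ u v, D (u * v) = D u * v + u * D v)
    (ι : A →+* E) (hinj : Function.Injective ι) {d : A → A} (hDι : ∀ a, D (ι a) = ι (d a))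
    {h : E} (hh : h ≠ 0) {w n : A} (hDh : D h * ι w = h * ι n)
    {u v : A} (hv : v ≠ 0) (hQ : D (ι u * h / ι v) = 0) :
    (d u * v - u * d v) * w + u * v * n = 0 := by
  have hιv : ι v ≠ 0 := (map_ne_zero_iff ι hinj).mpr hv
  have hquot := hD (ι u * h / ι v) (ι v)
  rw [div_mul_cancel₀ _ hιv, hQ, zero_mul, zero_add, hD, hDι, hDι] at hquot
  field_simp at hquot
  refine (map_eq_zero_iff ι hinj).mp ((mul_eq_zero.mp ?_).resolve_left hh)
  simp only [map_add, map_mul, map_sub]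
  linear_combination ι w * hquot - ι u * ι v * hDh

namespace Polynomial

section Euler

variable {R S ι : Type*} [CommRing R] [CommRing S] [Algebra S R] [Fintype ι] [DecidableEq ι]

/-- The numerator of `∑ i, w i • (c i)' / c i` over the common denominator `∏ i, c i`. -/
noncomputable def weightedLogDerivNum (c : ι → R[X]) (w : ι → S) : R[X] :=
  ∑ i, w i • (derivative (c i) * ∏ j ∈ univ.erase i, c j)

theorem weightedLogDerivNum_sub_natCast (c : ι → R[X]) (w : ι → S) (s : ℕ) :
    weightedLogDerivNum c (fun i => w i - s) =
      weightedLogDerivNum c w - s * derivative (∏ i, c i) := by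
  simp only [weightedLogDerivNum, sub_smul, sum_sub_distrib, derivative_prod_finset, mul_sum,
    Nat.cast_smul_eq_nsmul, nsmul_eq_mul, mul_comm (derivative _)]

theorem coeff_X_mul_derivative (f : R[X]) (n : ℕ) :
    (X * derivative f).coeff n = n * f.coeff n := by
  cases n with
  | zero => simp
  | succ n => rw [coeff_X_mul, coeff_derivative]; push_cast; ring

theorem natDegree_X_mul_derivative_le (f : R[X]) : (X * derivative f).natDegree ≤ f.natDegree :=
  natDegree_le_iff_coeff_eq_zero.mpr fun n hn => by
    rw [coeff_X_mul_derivative, coeff_eq_zero_of_natDegree_lt (by exact_mod_cast hn), mul_zero]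

theorem derivative_pow_mul_self (f : R[X]) (s : ℕ) :
    derivative (f ^ s) * f = s * f ^ s * derivative f := by
  cases s with
  | zero => simp
  | succ s => rw [derivative_pow_succ]; simp only [map_add, map_natCast, map_one]; push_cast; ring

variable [IsDomain R]

theorem coeff_X_mul_derivative_mul_natDegree {f g : R[X]} (hf : f ≠ 0) (hg : g ≠ 0) :
    (X * derivative f * g).coeff (f * g).natDegree = f.natDegree * (f * g).leadingCoeff := by
  rw [natDegree_mul hf hg,
    coeff_mul_add_eq_of_natDegree_le (natDegree_X_mul_derivative_le f) le_rfl,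
    coeff_X_mul_derivative, leadingCoeff_mul, mul_assoc, coeff_natDegree, coeff_natDegree]

theorem natCast_natDegree_add_sum_smul_eq_zero {q : R[X]} {c : ι → R[X]} {w : ι → S}
    (hq : q ≠ 0) (hc : ∀ i, c i ≠ 0)
    (h : derivative q * ∏ i, c i + q * weightedLogDerivNum c w = 0) :
    (q.natDegree : R) + ∑ i, w i • ((c i).natDegree : R) = 0 := by
  set P := ∏ i, c i
  have hP : P ≠ 0 := prod_ne_zero_iff.mpr fun i _ => hc i
  have hterm : ∀ i, (X * (q * (w i • (derivative (c i) * ∏ j ∈ univ.erase i, c j)))).coeff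
      (q * P).natDegree = w i • ((c i).natDegree * (q * P).leadingCoeff) := by
    intro i
    have hsplit : q * P = c i * (q * ∏ j ∈ univ.erase i, c j) := by
      rw [show P = _ from (mul_prod_erase univ c (mem_univ i)).symm]; ring
    have hg : q * ∏ j ∈ univ.erase i, c j ≠ 0 :=
      mul_ne_zero hq (prod_ne_zero_iff.mpr fun j _ => hc j)
    rw [hsplit, ← coeff_X_mul_derivative_mul_natDegree (hc i) hg, ← coeff_smul]
    congr 1
    simp only [Algebra.smul_def]
    ring
  have hcoeff := congrArg (fun f => (X * f).coeff (q * P).natDegree) h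
  simp only [weightedLogDerivNum, mul_add, mul_sum, coeff_add, finsetSum_coeff, hterm,
    ← mul_assoc X (derivative q) P, coeff_X_mul_derivative_mul_natDegree hq hP, mul_zero,
    coeff_zero] at hcoeff
  refine (mul_eq_zero.mp ?_).resolve_right (leadingCoeff_ne_zero.mpr (mul_ne_zero hq hP))
  simpa only [add_mul, sum_mul, smul_mul_assoc] using hcoeff

theorem derivative_mul_prod_add_mul_weightedLogDerivNum_eq_zero {q c0 u v : R[X]}
    {c : ι → R[X]} {w : ι → S} {s : ℕ} (hc0 : c0 ≠ 0) (hu : u ≠ 0) (hv : v ≠ 0)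
    (hc : ∀ i, c i ≠ 0) (hu' : derivative u = 0)
    (h : (derivative q * (c0 * (u * ∏ i, c i) ^ s) - q * derivative (c0 * (u * ∏ i, c i) ^ s))
        * (c0 * v * ∏ i, c i)
      + q * (c0 * (u * ∏ i, c i) ^ s)
        * (derivative c0 * v * ∏ i, c i + c0 * v * weightedLogDerivNum c w) = 0) :
    derivative q * ∏ i, c i + q * weightedLogDerivNum c (fun i => w i - s) = 0 := by
  set P := ∏ i, c i
  have hP : P ≠ 0 := prod_ne_zero_iff.mpr fun i _ => hc i
  have hpow := derivative_pow_mul_self (u * P) s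
  rw [derivative_mul, hu', zero_mul, zero_add] at hpow
  rw [derivative_mul] at h
  rw [weightedLogDerivNum_sub_natCast]
  have hne : c0 ^ 2 * v * (u * P) ^ s * (u * P) ≠ 0 := by positivity
  refine (mul_eq_zero.mp ?_).resolve_left hne
  linear_combination (u * P) * h + q * c0 ^ 2 * v * P * hpow

end Euler

end Polynomial

open Polynomial.Bivariate in
theorem certificate_nonzero_rational_case_general
    {K : Type*} {E : Type*} [Field K] [CharZero K] [Field E]
    (Dy : E → E)
    (hDymul : ∀ u v : E, Dy (u * v) = Dy u * v + u * Dy v)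
    (ι : Polynomial (Polynomial K) →+* E)
    (hinj : Function.Injective ι)
    (hDyι : ∀ q : Polynomial (Polynomial K), Dy (ι q) = ι (DY q))
    (L : ℕ) (a b c0 bs : Polynomial (Polynomial K))
    (c : Fin L → Polynomial (Polynomial K)) (e : Fin L → K)
    (hb : b ≠ 0) (hc0 : c0 ≠ 0) (hc : ∀ ℓ, c ℓ ≠ 0)
    (hbs : Squarefree bs)
    (hbsb : ∀ q : Polynomial (Polynomial K), Prime q → (q ∣ bs ↔ q ∣ b))
    (h : E) (hh : h ≠ 0)
    (hDyh : Dy h * ι (c0 * b ^ 2 * (∏ ℓ, c ℓ))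
      = h * ι (DY c0 * b ^ 2 * (∏ ℓ, c ℓ)
          + (DY a * b - a * DY b) * c0 * (∏ ℓ, c ℓ)
          + c0 * b ^ 2 * ∑ ℓ, e ℓ • (DY (c ℓ) * ∏ j ∈ Finset.univ.erase ℓ, c j)))
    (r : ℕ) (hr : 1 ≤ r)
    (hya : degY a = 0) (hyb : degY b = 0)
    (η : ℤ) (hη : (η : K) = ∑ ℓ, e ℓ * (degY (c ℓ) : K)) :
    ∀ q : Polynomial (Polynomial K), q ≠ 0 →
      (∀ n m : ℕ, (m : ℤ) = ((degY bs + max (degY a) (degY b) + ∑ ℓ, degY (c ℓ)) : ℤ) * ((r : ℤ) - 1) - η →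
        (q.coeff n).coeff m = 0) →
      Dy (ι q * h / ι (c0 * (b * bs * ∏ ℓ, c ℓ) ^ (r - 1))) ≠ 0 := by
  obtain ⟨s, rfl⟩ : ∃ s, r = s + 1 := ⟨r - 1, by omega⟩
  intro q hq hcoeff hDyQ
  rw [Nat.add_sub_cancel] at hDyQ
  have hbs0 : bs ≠ 0 := hbs.ne_zero
  have hybs : degY bs = 0 := Nat.eq_zero_of_le_zero
    (hyb ▸ degY_le_of_dvd (hbs.dvd_of_forall_prime_dvd fun p hp => (hbsb p hp).mp) hb)
  have hP : ∏ ℓ, c ℓ ≠ 0 := prod_ne_zero_iff.mpr fun ℓ _ => hc ℓ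
  have hpoly := numerator_eq_zero_of_apply_mul_div_eq_zero hDymul ι hinj hDyι hh hDyh
    (by positivity) hDyQ
  have hswap := congrArg swap hpoly
  simp only [map_add, map_sub, map_mul, map_pow, map_sum, map_prod, map_smul, map_zero, swap_DY,
    derivative_swap_eq_zero_of_degY_eq_zero hya, derivative_swap_eq_zero_of_degY_eq_zero hyb,
    zero_mul, mul_zero, sub_self, add_zero] at hswap
  have hlog := derivative_mul_prod_add_mul_weightedLogDerivNum_eq_zero (w := e)
    (by simpa using hc0) (by simpa using mul_ne_zero hb hbs0) (by simpa using hb)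
    (fun ℓ => by simpa using hc ℓ) (by
      rw [derivative_mul, derivative_swap_eq_zero_of_degY_eq_zero hyb,
        derivative_swap_eq_zero_of_degY_eq_zero hybs, zero_mul, mul_zero, add_zero]) hswap
  have heuler := natCast_natDegree_add_sum_smul_eq_zero (by simpa using hq)
    (fun ℓ => by simpa using hc ℓ) hlog
  have hdegK : ((swap q).natDegree : K) + ∑ ℓ, (e ℓ - s) * (degY (c ℓ) : K) = 0 :=
    (algebraMap K K[X]).injective (by
      simpa [Algebra.smul_def, degY_eq_natDegree_swap] using heuler)
  obtain ⟨n, hn⟩ := exists_coeff_coeff_natDegree_swap_ne_zero hq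
  refine hn (hcoeff n _ (Int.cast_injective (α := K) ?_))
  simp only [sub_mul, sum_sub_distrib, ← mul_sum] at hdegK
  rw [hya, hyb, hybs, max_self]
  push_cast
  linear_combination hdegK + hη

theorem certificate_nonzero_rational_case
    {K : Type*} {E : Type*} [Field K] [CharZero K] [Field E]
    (Dx Dy : E → E)
    (hDxadd : ∀ u v : E, Dx (u + v) = Dx u + Dx v)
    (hDxmul : ∀ u v : E, Dx (u * v) = Dx u * v + u * Dx v)
    (hDyadd : ∀ u v : E, Dy (u + v) = Dy u + Dy v)
    (hDymul : ∀ u v : E, Dy (u * v) = Dy u * v + u * Dy v)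
    (hcomm : ∀ u : E, Dx (Dy u) = Dy (Dx u))
    (ι : Polynomial (Polynomial K) →+* E)
    (hinj : Function.Injective ι)
    (hDxι : ∀ q : Polynomial (Polynomial K), Dx (ι q) = ι (Polynomial.derivative q))
    (hDyι : ∀ q : Polynomial (Polynomial K), Dy (ι q) = ι (DY q))
    (L : ℕ) (a b c0 bs : Polynomial (Polynomial K))
    (c : Fin L → Polynomial (Polynomial K)) (e : Fin L → K)
    (ha : a ≠ 0) (hb : b ≠ 0) (hc0 : c0 ≠ 0) (hc : ∀ ℓ, c ℓ ≠ 0)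
    (hbs : Squarefree bs)
    (hbsb : ∀ q : Polynomial (Polynomial K), Prime q → (q ∣ bs ↔ q ∣ b))
    (h : E) (hh : h ≠ 0)
    (hDxh : Dx h * ι (c0 * b ^ 2 * (∏ ℓ, c ℓ))
      = h * ι (Polynomial.derivative c0 * b ^ 2 * (∏ ℓ, c ℓ)
          + (Polynomial.derivative a * b - a * Polynomial.derivative b) * c0 * (∏ ℓ, c ℓ)
          + c0 * b ^ 2 * ∑ ℓ, e ℓ • (Polynomial.derivative (c ℓ) * ∏ j ∈ Finset.univ.erase ℓ, c j)))
    (hDyh : Dy h * ι (c0 * b ^ 2 * (∏ ℓ, c ℓ))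
      = h * ι (DY c0 * b ^ 2 * (∏ ℓ, c ℓ)
          + (DY a * b - a * DY b) * c0 * (∏ ℓ, c ℓ)
          + c0 * b ^ 2 * ∑ ℓ, e ℓ • (DY (c ℓ) * ∏ j ∈ Finset.univ.erase ℓ, c j)))
    (r : ℕ) (hr : 1 ≤ r)
    (hya : degY a = 0) (hyb : degY b = 0)
    (hyc : ∀ ℓ, (∀ n : ℤ, e ℓ ≠ (n : K)) → degY (c ℓ) = 0)
    (η : ℤ) (hη : (η : K) = ∑ ℓ, e ℓ * (degY (c ℓ) : K)) :
    ∀ q : Polynomial (Polynomial K), q ≠ 0 →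
      (∀ n m : ℕ, (m : ℤ) = ((degY bs + max (degY a) (degY b) + ∑ ℓ, degY (c ℓ)) : ℤ) * ((r : ℤ) - 1) - η →
        (q.coeff n).coeff m = 0) →
      Dy (ι q * h / ι (c0 * (b * bs * ∏ ℓ, c ℓ) ^ (r - 1))) ≠ 0 :=
  certificate_nonzero_rational_case_general Dy hDymul ι hinj hDyι L a b c0 bs c e hb hc0 hc hbs hbsb
    h hh hDyh r hr hya hyb η hη
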